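/- Let f be Lipschitz on X and let x be a periodic point with I(x) ≠ 0, where I(y) = n_y β(f) − f^{n_y}(y). Then lim_{ε→0} inf{ I(y) : y periodic, 0 < d(y,x) ≤ ε } = +∞. In particular the extension Ĩ(x) := lim_{ε→0} inf{I(y) : y periodic, d(y,x) ≤ ε} satisfies Ĩ(x) = I(x) for every periodic x. -/

import Mathlib

/-!
Let `x` have minimal period `p` and `I(x) > 0`. If a periodic `y ≠ x` agrees with `x` on the
first `p²M` symbols, then the period of `y` exceeds `pM`, so the orbit segment of `y` of length
`pM` shadows `M` full rounds of the orbit of `x`, each of which falls short of the `β`-average by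
`I(x)`. By bounded distortion of Lipschitz Birkhoff sums both the shadowing error and the
excess of the remaining segment over its `β`-average are at most `C / (1 - θ)`, so
`I(y) ≥ M I(x) - 2C/(1-θ)`. That `S_m f ≤ m β(f)` on `m`-periodic points comes from the
invariant orbit measure.
-/

open MeasureTheory Filter Real Topology
open scoped ENNReal

noncomputable section

abbrev X (d : ℕ) : Type := ℕ → Fin d

def shift {d : ℕ} (x : X d) : X d := fun n => x (n + 1)

def birkhoff {d : ℕ} (f : X d → ℝ) (n : ℕ) (x : X d) : ℝ :=
  ∑ i ∈ Finset.range n, f (shift^[i] x)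

def IsPeriodic {d : ℕ} (x : X d) : Prop := ∃ n, 0 < n ∧ shift^[n] x = x

def minPer {d : ℕ} (x : X d) : ℕ := Function.minimalPeriod shift x

def beta {d : ℕ} (f : X d → ℝ) : ℝ :=
  sSup {r : ℝ | ∃ μ : Measure (X d), IsProbabilityMeasure μ ∧ μ.map shift = μ ∧ r = ∫ x, f x ∂μ}

def Ifun {d : ℕ} (f : X d → ℝ) (x : X d) : ℝ :=
  (minPer x : ℝ) * beta f - birkhoff f (minPer x) x

def dtheta {d : ℕ} (θ : ℝ) (x y : X d) : ℝ :=
  letI : Decidable (x = y) := Classical.dec _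
  if h : x = y then 0 else θ ^ Nat.find (Function.ne_iff.mp h)

def LipWrt {d : ℕ} (θ C : ℝ) (f : X d → ℝ) : Prop :=
  ∀ x y, |f x - f y| ≤ C * dtheta θ x y

def periodize {d : ℕ} (n : ℕ) (w : Fin (n + 1) → Fin d) : X d :=
  fun i => w ⟨i % (n + 1), Nat.mod_lt i (Nat.succ_pos n)⟩

def pressure {d : ℕ} (g : X d → ℝ) : ℝ :=
  Filter.limsup (fun n : ℕ =>
    Real.log (∑ w : Fin (n + 1) → Fin d, Real.exp (birkhoff g (n + 1) (periodize n w))) / ((n : ℝ) + 1))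
    Filter.atTop

def zetaVal {d : ℕ} (f : X d → ℝ) (c s : ℝ) (k : X d → ℝ) : ℝ :=
  ∑' n : ℕ, ∑ w : Fin (n + 1) → Fin d,
    Real.exp (c * s * birkhoff f (n + 1) (periodize n w) - ((n : ℝ) + 1) * pressure (fun y => c * f y))
      * (birkhoff k (n + 1) (periodize n w) / ((n : ℝ) + 1))

def etaVal {d : ℕ} (f : X d → ℝ) (c : ℝ) (N : ℕ) (k : X d → ℝ) : ℝ :=
  ∑ n ∈ Finset.range N, ∑ w : Fin (n + 1) → Fin d,
    Real.exp (c * birkhoff f (n + 1) (periodize n w)) * (birkhoff k (n + 1) (periodize n w) / ((n : ℝ) + 1))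

def piVal {d : ℕ} (f : X d → ℝ) (c : ℝ) (N : ℕ) (k : X d → ℝ) : ℝ :=
  ∑ n ∈ Finset.range N, ∑ w : Fin (n + 1) → Fin d,
    Real.exp (c * birkhoff f (n + 1) (periodize n w) - ((n : ℝ) + 1) * pressure (fun y => c * f y))
      * (birkhoff k (n + 1) (periodize n w) / ((n : ℝ) + 1))

def cylSet {d : ℕ} (m : ℕ) (w : Fin m → Fin d) : Set (X d) :=
  {x : X d | ∀ i : Fin m, x i = w i}

def Itilde {d : ℕ} (θ : ℝ) (f : X d → ℝ) (x : X d) : EReal :=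
  ⨆ ε : {e : ℝ // 0 < e},
    sInf {r : EReal | ∃ y : X d, IsPeriodic y ∧ dtheta θ x y ≤ ε.1 ∧ r = ((Ifun f y : ℝ) : EReal)}

def orbitMeasure {d : ℕ} (x : X d) : Measure (X d) :=
  ((minPer x : ℝ≥0∞))⁻¹ • ∑ i ∈ Finset.range (minPer x), Measure.dirac (shift^[i] x)

open Function

section Dynamics

variable {d : ℕ}

lemma shift_iterate_apply (x : X d) (k n : ℕ) : (shift^[k] x) n = x (n + k) := by
  induction k generalizing x with
  | zero => rfl
  | succ k ih => rw [iterate_succ_apply, ih]; rfl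

lemma measurable_shift : Measurable (shift : X d → X d) :=
  measurable_pi_lambda _ fun n => measurable_pi_apply (n + 1)

lemma minPer_pos {x : X d} (hx : IsPeriodic x) : 0 < minPer x := by
  obtain ⟨n, hn, hnx⟩ := hx
  exact IsPeriodicPt.minimalPeriod_pos hn hnx

lemma isPeriodicPt_minPer (x : X d) : IsPeriodicPt shift (minPer x) x :=
  isPeriodicPt_minimalPeriod shift x

lemma apply_mod_of_isPeriodicPt {x : X d} {m : ℕ} (hx : IsPeriodicPt shift m x) (n : ℕ) :
    x (n % m) = x n := by
  conv_rhs => rw [← Nat.mod_add_div n m, ← shift_iterate_apply x, (hx.mul_const _).eq]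

lemma eq_of_agree_of_isPeriodicPt {x y : X d} {p q : ℕ} (hp : 0 < p) (hq : 0 < q)
    (hx : IsPeriodicPt shift p x) (hy : IsPeriodicPt shift q y) (h : ∀ i < p * q, x i = y i) :
    x = y := by
  funext n
  rw [← apply_mod_of_isPeriodicPt (hx.mul_const q), ← apply_mod_of_isPeriodicPt (hy.const_mul p)]
  exact h _ (Nat.mod_lt _ (Nat.mul_pos hp hq))

end Dynamics

section Metric

variable {d : ℕ} {θ : ℝ}

lemma dtheta_self (θ : ℝ) (x : X d) : dtheta θ x x = 0 := dif_pos rfl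

lemma dtheta_nonneg (hθ : 0 ≤ θ) (x y : X d) : 0 ≤ dtheta θ x y := by
  unfold dtheta
  split <;> positivity

lemma dtheta_le_pow_iff (hθ0 : 0 < θ) (hθ1 : θ < 1) {x y : X d} {N : ℕ} :
    dtheta θ x y ≤ θ ^ N ↔ ∀ i < N, x i = y i := by
  unfold dtheta
  split_ifs with h
  · simp [h, pow_nonneg hθ0.le]
  · simp only [pow_le_pow_iff_right_of_lt_one₀ hθ0 hθ1, Nat.le_find_iff, ne_eq, not_not]

lemma dtheta_le_one (hθ0 : 0 < θ) (hθ1 : θ < 1) (x y : X d) : dtheta θ x y ≤ 1 := by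
  simpa using (dtheta_le_pow_iff hθ0 hθ1 (x := x) (y := y) (N := 0)).2 (by simp)

variable {C : ℝ} {f : X d → ℝ}

lemma LipWrt.mono (hθ : 0 ≤ θ) (hf : LipWrt θ C f) {C' : ℝ} (h : C ≤ C') : LipWrt θ C' f :=
  fun x y => (hf x y).trans (mul_le_mul_of_nonneg_right h (dtheta_nonneg hθ x y))

lemma LipWrt.abs_le (hθ0 : 0 < θ) (hθ1 : θ < 1) (hC : 0 ≤ C) (hf : LipWrt θ C f) (x y : X d) :
    |f x| ≤ |f y| + C := by
  have := abs_sub_abs_le_abs_sub (f x) (f y)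
  nlinarith [hf x y, dtheta_le_one hθ0 hθ1 x y]

end Metric

section Birkhoff

variable {d : ℕ}

lemma birkhoff_add (f : X d → ℝ) (a b : ℕ) (x : X d) :
    birkhoff f (a + b) x = birkhoff f a x + birkhoff f b (shift^[a] x) := by
  simp only [birkhoff, Finset.sum_range_add, ← iterate_add_apply, Nat.add_comm _ a]

lemma birkhoff_mul_of_isPeriodicPt (f : X d → ℝ) {p : ℕ} {x : X d} (hx : IsPeriodicPt shift p x)
    (k : ℕ) : birkhoff f (p * k) x = k * birkhoff f p x := by
  induction k with
  | zero => simp [birkhoff]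
  | succ k ih =>
    rw [Nat.mul_succ, birkhoff_add, ih, (hx.mul_const k).eq]
    push_cast
    ring

variable {θ C : ℝ} {f : X d → ℝ}

/-- Bounded distortion: the error `C θ^(N-i)` of the `i`-th term sums to a geometric series. -/
lemma abs_birkhoff_sub_le (hθ0 : 0 < θ) (hθ1 : θ < 1) (hC : 0 ≤ C) (hf : LipWrt θ C f)
    {x y : X d} {m N : ℕ} (hmN : m ≤ N) (h : ∀ i < N, x i = y i) :
    |birkhoff f m x - birkhoff f m y| ≤ C / (1 - θ) := by
  have hterm : ∀ i ∈ Finset.range m,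
      |f (shift^[i] x) - f (shift^[i] y)| ≤ C * θ ^ (m - 1 - i) := by
    intro i hi
    have hi : i < m := Finset.mem_range.1 hi
    have hclose : dtheta θ (shift^[i] x) (shift^[i] y) ≤ θ ^ (N - i) :=
      (dtheta_le_pow_iff hθ0 hθ1).2 fun j hj => by
        simpa only [shift_iterate_apply] using h (j + i) (by omega)
    calc |f (shift^[i] x) - f (shift^[i] y)| ≤ C * θ ^ (N - i) :=
          (hf _ _).trans (mul_le_mul_of_nonneg_left hclose hC)
      _ ≤ C * θ ^ (m - 1 - i) :=
          mul_le_mul_of_nonneg_left (pow_le_pow_of_le_one hθ0.le hθ1.le (by omega)) hC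
  calc |birkhoff f m x - birkhoff f m y|
      ≤ ∑ i ∈ Finset.range m, |f (shift^[i] x) - f (shift^[i] y)| := by
        rw [birkhoff, birkhoff, ← Finset.sum_sub_distrib]
        exact Finset.abs_sum_le_sum_abs _ _
    _ ≤ ∑ i ∈ Finset.range m, C * θ ^ (m - 1 - i) := Finset.sum_le_sum hterm
    _ = C * ∑ i ∈ Finset.Ico 0 m, θ ^ i := by
        rw [← Finset.mul_sum, Finset.sum_range_reflect, Finset.range_eq_Ico]
    _ ≤ C * (θ ^ 0 / (1 - θ)) :=
        mul_le_mul_of_nonneg_left (geom_sum_Ico_le_of_lt_one hθ0.le hθ1) hC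
    _ = C / (1 - θ) := by ring

end Birkhoff

section OrbitMeasure

open MeasureTheory

variable {d : ℕ}

lemma isProbabilityMeasure_orbitMeasure {x : X d} (hx : 0 < minPer x) :
    IsProbabilityMeasure (orbitMeasure x) := by
  constructor
  simp [orbitMeasure, ENNReal.inv_mul_cancel (Nat.cast_ne_zero.2 hx.ne')]

lemma map_shift_orbitMeasure (x : X d) : (orbitMeasure x).map shift = orbitMeasure x := by
  have hrotate : ∀ (g : ℕ → Measure (X d)) (p : ℕ), g p = g 0 →
      ∑ i ∈ Finset.range p, g (i + 1) = ∑ i ∈ Finset.range p, g i := by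
    rintro g (_ | p) hg
    · rfl
    · rw [Finset.sum_range_succ, Finset.sum_range_succ' g, hg]
  rw [orbitMeasure, Measure.map_smul, Measure.map_finset_sum measurable_shift.aemeasurable]
  simp only [Measure.map_dirac' measurable_shift, ← iterate_succ_apply' shift]
  rw [hrotate (fun i => Measure.dirac (shift^[i] x)) _ (congrArg _ (isPeriodicPt_minPer x).eq)]

lemma integral_orbitMeasure (f : X d → ℝ) (x : X d) :
    ∫ y, f y ∂orbitMeasure x = birkhoff f (minPer x) x / minPer x := by
  rw [orbitMeasure, integral_smul_measure,
    integral_finsetSum_measure fun i _ => integrable_dirac enorm_lt_top]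
  simp [integral_dirac, birkhoff, div_eq_inv_mul]

end OrbitMeasure

section Beta

open MeasureTheory

variable {d : ℕ} {θ C : ℝ} {f : X d → ℝ}

lemma integral_le_beta (hθ0 : 0 < θ) (hθ1 : θ < 1) (hC : 0 ≤ C) (hf : LipWrt θ C f) (x₀ : X d)
    {μ : Measure (X d)} [IsProbabilityMeasure μ] (hμ : μ.map shift = μ) :
    ∫ x, f x ∂μ ≤ beta f := by
  refine le_csSup ⟨|f x₀| + C, ?_⟩ ⟨μ, inferInstance, hμ, rfl⟩
  rintro _ ⟨ν, hν, -, rfl⟩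
  have hbound := norm_integral_le_of_norm_le_const (μ := ν)
    (ae_of_all _ fun w => (Real.norm_eq_abs _).trans_le (hf.abs_le hθ0 hθ1 hC w x₀))
  rw [probReal_univ, mul_one] at hbound
  exact (le_abs_self _).trans hbound

lemma birkhoff_minPer_le (hθ0 : 0 < θ) (hθ1 : θ < 1) (hC : 0 ≤ C) (hf : LipWrt θ C f)
    (x : X d) : birkhoff f (minPer x) x ≤ minPer x * beta f := by
  rcases Nat.eq_zero_or_pos (minPer x) with h0 | hpos
  · simp [h0, birkhoff]
  have := isProbabilityMeasure_orbitMeasure hpos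
  have hint := integral_le_beta hθ0 hθ1 hC hf x (map_shift_orbitMeasure x)
  rw [integral_orbitMeasure, div_le_iff₀ (by exact_mod_cast hpos)] at hint
  linarith

lemma Ifun_nonneg (hθ0 : 0 < θ) (hθ1 : θ < 1) (hC : 0 ≤ C) (hf : LipWrt θ C f) (x : X d) :
    0 ≤ Ifun f x :=
  sub_nonneg.2 (birkhoff_minPer_le hθ0 hθ1 hC hf x)

lemma birkhoff_le_of_isPeriodicPt (hθ0 : 0 < θ) (hθ1 : θ < 1) (hC : 0 ≤ C) (hf : LipWrt θ C f)
    {x : X d} {m : ℕ} (hx : IsPeriodicPt shift m x) : birkhoff f m x ≤ m * beta f := by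
  obtain ⟨k, rfl⟩ := hx.minimalPeriod_dvd
  rw [birkhoff_mul_of_isPeriodicPt f (isPeriodicPt_minimalPeriod shift x)]
  have := mul_le_mul_of_nonneg_left (birkhoff_minPer_le hθ0 hθ1 hC hf x) k.cast_nonneg
  push_cast
  unfold minPer at this
  linarith

/-- Compare with the periodic point repeating the first `m` symbols of `x`. -/
lemma birkhoff_le_mul_beta_add (hθ0 : 0 < θ) (hθ1 : θ < 1) (hC : 0 ≤ C) (hf : LipWrt θ C f)
    (x : X d) (m : ℕ) : birkhoff f m x ≤ m * beta f + C / (1 - θ) := by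
  set x' : X d := fun n => x (n % m)
  have hper : IsPeriodicPt shift m x' :=
    funext fun n => by simp only [x', shift_iterate_apply, Nat.add_mod_right]
  have hagree : ∀ i < m, x i = x' i := fun i hi => by simp only [x', Nat.mod_eq_of_lt hi]
  have hclose := abs_birkhoff_sub_le hθ0 hθ1 hC hf le_rfl hagree
  have := birkhoff_le_of_isPeriodicPt hθ0 hθ1 hC hf hper
  linarith [le_abs_self (birkhoff f m x - birkhoff f m x')]

end Beta

section Estimate

variable {d : ℕ} {θ C : ℝ} {f : X d → ℝ}

lemma le_Ifun_of_agree (hθ0 : 0 < θ) (hθ1 : θ < 1) (hC : 0 ≤ C) (hf : LipWrt θ C f)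
    {x : X d} (hx : IsPeriodic x) (hIx : 0 < Ifun f x) (R : ℝ) :
    ∃ N, ∀ y, IsPeriodic y → y ≠ x → (∀ i < N, x i = y i) → R ≤ Ifun f y := by
  set p := minPer x
  have hp : 0 < p := minPer_pos hx
  obtain ⟨M, hM⟩ := exists_nat_ge ((R + 2 * (C / (1 - θ))) / Ifun f x)
  refine ⟨p * (p * M), fun y hy hyx hagree => ?_⟩
  set n := minPer y
  have hMn : p * M ≤ n := by
    by_contra! hlt
    refine hyx (eq_of_agree_of_isPeriodicPt (minPer_pos hy) hp (isPeriodicPt_minPer y)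
      (isPeriodicPt_minPer x) fun i hi => (hagree i ?_).symm)
    exact hi.trans_le (by rw [Nat.mul_comm]; exact Nat.mul_le_mul_left p hlt.le)
  have hsplit := birkhoff_add f (p * M) (n - p * M) y
  rw [Nat.add_sub_cancel' hMn] at hsplit
  have hhead := abs_birkhoff_sub_le hθ0 hθ1 hC hf (Nat.le_mul_of_pos_left (p * M) hp) hagree
  have hrounds : birkhoff f (p * M) x = M * (p * beta f - Ifun f x) := by
    rw [birkhoff_mul_of_isPeriodicPt f (isPeriodicPt_minPer x), Ifun]
    ring
  have htail := birkhoff_le_mul_beta_add hθ0 hθ1 hC hf (shift^[p * M] y) (n - p * M)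
  rw [Nat.cast_sub hMn] at htail
  have hMI : R + 2 * (C / (1 - θ)) ≤ M * Ifun f x := (div_le_iff₀ hIx).1 hM
  have hIy : Ifun f y = n * beta f - birkhoff f n y := rfl
  push_cast at htail
  linarith [neg_abs_le (birkhoff f (p * M) x - birkhoff f (p * M) y)]

lemma exists_dtheta_le_imp_le_Ifun (hθ0 : 0 < θ) (hθ1 : θ < 1) (hC : 0 ≤ C)
    (hf : LipWrt θ C f) {x : X d} (hx : IsPeriodic x) (hIx : 0 < Ifun f x) (R : ℝ) :
    ∃ δ > 0, ∀ y, IsPeriodic y → y ≠ x → dtheta θ x y ≤ δ → R ≤ Ifun f y := by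
  obtain ⟨N, hN⟩ := le_Ifun_of_agree hθ0 hθ1 hC hf hx hIx R
  exact ⟨θ ^ N, pow_pos hθ0 N, fun y hy hyx hxy =>
    hN y hy hyx ((dtheta_le_pow_iff hθ0 hθ1).1 hxy)⟩

lemma tendsto_sInf_Ifun_top (hθ0 : 0 < θ) (hθ1 : θ < 1) (hC : 0 ≤ C) (hf : LipWrt θ C f)
    {x : X d} (hx : IsPeriodic x) (hIx : 0 < Ifun f x) :
    Tendsto (fun ε : ℝ =>
        sInf {r : EReal | ∃ y : X d, IsPeriodic y ∧ 0 < dtheta θ x y ∧ dtheta θ x y ≤ ε ∧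
          r = ((Ifun f y : ℝ) : EReal)})
      (𝓝[>] (0 : ℝ)) (𝓝 (⊤ : EReal)) := by
  rw [EReal.tendsto_nhds_top_iff_real]
  intro R
  obtain ⟨δ, hδ, hR⟩ := exists_dtheta_le_imp_le_Ifun hθ0 hθ1 hC hf hx hIx (R + 1)
  filter_upwards [Ioc_mem_nhdsGT hδ] with ε hε
  refine (EReal.coe_lt_coe_iff.2 (lt_add_one R)).trans_le (le_sInf ?_)
  rintro _ ⟨y, hy, hpos, hle, rfl⟩
  refine EReal.coe_le_coe_iff.2 (hR y hy ?_ (hle.trans hε.2))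
  rintro rfl
  exact hpos.ne' (dtheta_self θ y)

lemma Itilde_eq_Ifun (hθ0 : 0 < θ) (hθ1 : θ < 1) (hC : 0 ≤ C) (hf : LipWrt θ C f)
    {x : X d} (hx : IsPeriodic x) : Itilde θ f x = Ifun f x := by
  refine le_antisymm (iSup_le fun ε => sInf_le ⟨x, hx, (dtheta_self θ x).trans_le ε.2.le, rfl⟩) ?_
  obtain ⟨δ, hδ, hnear⟩ :
      ∃ δ > 0, ∀ y, IsPeriodic y → dtheta θ x y ≤ δ → Ifun f x ≤ Ifun f y := by
    rcases (Ifun_nonneg hθ0 hθ1 hC hf x).eq_or_lt with h0 | hpos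
    · exact ⟨1, one_pos, fun y _ _ => h0 ▸ Ifun_nonneg hθ0 hθ1 hC hf y⟩
    obtain ⟨δ, hδ, h⟩ := exists_dtheta_le_imp_le_Ifun hθ0 hθ1 hC hf hx hpos (Ifun f x)
    refine ⟨δ, hδ, fun y hy hxy => ?_⟩
    rcases eq_or_ne y x with rfl | hyx
    · exact le_rfl
    · exact h y hy hyx hxy
  refine le_iSup_of_le ⟨δ, hδ⟩ (le_sInf ?_)
  rintro _ ⟨y, hy, hxy, rfl⟩
  exact EReal.coe_le_coe_iff.2 (hnear y hy hxy)

end Estimate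

theorem stmt8_general (d : ℕ) (θ C : ℝ) (hθ0 : 0 < θ) (hθ1 : θ < 1)
    (f : X d → ℝ) (hf : LipWrt θ C f) (x : X d) (hx : IsPeriodic x) (hIx : Ifun f x ≠ 0) :
    Tendsto (fun ε : ℝ =>
        sInf {r : EReal | ∃ y : X d, IsPeriodic y ∧ 0 < dtheta θ x y ∧ dtheta θ x y ≤ ε ∧
          r = ((Ifun f y : ℝ) : EReal)})
      (𝓝[>] (0 : ℝ)) (𝓝 (⊤ : EReal)) ∧
    (∀ z : X d, IsPeriodic z → Itilde θ f z = ((Ifun f z : ℝ) : EReal)) := by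
  have hC : 0 ≤ max C 0 := le_max_right C 0
  have hf' : LipWrt θ (max C 0) f := hf.mono hθ0.le (le_max_left C 0)
  have hIx' : 0 < Ifun f x := (Ifun_nonneg hθ0 hθ1 hC hf' x).lt_of_ne hIx.symm
  exact ⟨tendsto_sInf_Ifun_top hθ0 hθ1 hC hf' hx hIx', fun z hz => Itilde_eq_Ifun hθ0 hθ1 hC hf' hz⟩

theorem stmt8 (d : ℕ) (hd : 0 < d) (θ C : ℝ) (hθ0 : 0 < θ) (hθ1 : θ < 1)
    (f : X d → ℝ) (hf : LipWrt θ C f) (x : X d) (hx : IsPeriodic x) (hIx : Ifun f x ≠ 0) :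
    Tendsto (fun ε : ℝ =>
        sInf {r : EReal | ∃ y : X d, IsPeriodic y ∧ 0 < dtheta θ x y ∧ dtheta θ x y ≤ ε ∧
          r = ((Ifun f y : ℝ) : EReal)})
      (𝓝[>] (0 : ℝ)) (𝓝 (⊤ : EReal)) ∧
    (∀ z : X d, IsPeriodic z → Itilde θ f z = ((Ifun f z : ℝ) : EReal)) :=
  stmt8_general d θ C hθ0 hθ1 f hf x hx hIx
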